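/- arXiv:1708.01517 — 2 statements merged into one kernel-verified Lean document; each statement's English description precedes it below -/
import Mathlib

section
/- (Extension of the inverse of the small divisor ω·ℓ.) Let ν ≥ 1, τ > 0, k ∈ ℕ and γ ∈ (0,1]. Let χ : ℝ → [0,1] be a cut-off function (C^∞, even, χ(y) = 0 for |y| ≤ 1/3, χ(y) = 1 for |y| ≥ 2/3). For ℓ ∈ ℤ^ν with ℓ ≠ 0 define g_ℓ : ℝ^ν → ℝ by g_ℓ(ω) := χ( (ω·ℓ)·⟨ℓ⟩^τ·γ^{−1} ) / (ω·ℓ) if ω·ℓ ≠ 0, and g_ℓ(ω) := 0 if ω·ℓ = 0. Then g_ℓ is C^∞ on ℝ^ν, g_ℓ(ω) = 1/(ω·ℓ) for every ω with |ω·ℓ| ≥ γ⟨ℓ⟩^{−τ}, and there exists a constant C > 0, depending only on k, ν and χ, such that for all ω ∈ ℝ^ν and all multi-indices α with |α| ≤ k+1: γ^{|α|}·|∂_ω^α g_ℓ(ω)| ≤ C·γ^{−1}·⟨ℓ⟩^{μ}, where μ := k + 1 + (k+2)τ. -/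
/-- A cut-off function: C^∞, even, valued in [0,1], vanishing for |y| ≤ 1/3 and
equal to 1 for |y| ≥ 2/3. -/
def IsCutoff (χ : ℝ → ℝ) : Prop :=
  (∀ m : ℕ, ContDiff ℝ m χ) ∧ (∀ y : ℝ, χ (-y) = χ y) ∧
  (∀ y : ℝ, χ y ∈ Set.Icc (0 : ℝ) 1) ∧
  (∀ y : ℝ, |y| ≤ 1 / 3 → χ y = 0) ∧ (∀ y : ℝ, 2 / 3 ≤ |y| → χ y = 1)

/-- ⟨ℓ⟩ := max{1, max_i |ℓ_i|} for an integer vector ℓ ∈ ℤ^ν. -/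
noncomputable def brakF {ν : ℕ} (ℓ : Fin ν → ℤ) : ℝ :=
  ((max 1 (Finset.univ.sup fun i => (ℓ i).natAbs) : ℕ) : ℝ)

/-- Partial derivative in the i-th coordinate direction of a function on ℝ^ν. -/
noncomputable def pderiv' {ν : ℕ} (i : Fin ν) (f : (Fin ν → ℝ) → ℝ) : (Fin ν → ℝ) → ℝ :=
  fun x => fderiv ℝ f x (Pi.single i 1)

/-- Multi-index partial derivative ∂^α on ℝ^ν. -/
noncomputable def multiDeriv {ν : ℕ} (α : Fin ν → ℕ) (f : (Fin ν → ℝ) → ℝ) :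
    (Fin ν → ℝ) → ℝ :=
  (List.finRange ν).foldr (fun i g => (pderiv' i)^[α i] g) f

/-- The regularized inverse of the small divisor ω·ℓ:
g_ℓ(ω) = χ((ω·ℓ)⟨ℓ⟩^τ γ⁻¹)/(ω·ℓ), with g_ℓ(ω) = 0 when ω·ℓ = 0. -/
noncomputable def gsd {ν : ℕ} (χ : ℝ → ℝ) (τ γ : ℝ) (ℓ : Fin ν → ℤ) (ω : Fin ν → ℝ) : ℝ :=
  if (∑ i, ω i * (ℓ i : ℝ)) = 0 then 0
  else χ ((∑ i, ω i * (ℓ i : ℝ)) * brakF ℓ ^ τ * γ⁻¹) / (∑ i, ω i * (ℓ i : ℝ))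

/-!
With `c := ⟨ℓ⟩^τ γ⁻¹` one has `g_ℓ(ω) = c ψ(c ω·ℓ)` for `ψ(s) := χ(s)/s`, extended by `0` at `0`.
Since `χ` vanishes near `0`, `ψ` is smooth, and since `ψ(s) = 1/s` for `|s| ≥ 2/3`, every
derivative of `ψ` is bounded (by compactness near `0`, by `|(1/s)^{(n)}| ≤ n!` for `|s| ≥ 1`).
The chain rule along the linear form `ω ↦ c ω·ℓ` gives
`∂^α g_ℓ(ω) = c^{|α|+1} ℓ^α ψ^{(|α|)}(c ω·ℓ)`, and
`γ^{|α|} c^{|α|+1} |ℓ^α| ≤ γ⁻¹ ⟨ℓ⟩^{(|α|+1)τ + |α|} ≤ γ⁻¹ ⟨ℓ⟩^μ`.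
-/

open Filter Topology

namespace SmallDivisor

open scoped ContDiff

noncomputable def cutoffInv (χ : ℝ → ℝ) (s : ℝ) : ℝ := if s = 0 then 0 else χ s / s

variable {χ : ℝ → ℝ}

theorem cutoffInv_eq_inv {s : ℝ} (hs : χ s = 1) : cutoffInv χ s = s⁻¹ := by
  by_cases h : s = 0 <;> simp [cutoffInv, h, hs]

theorem contDiff_cutoffInv (hχ : ContDiff ℝ ∞ χ) (h0 : χ =ᶠ[𝓝 0] 0) :
    ContDiff ℝ ∞ (cutoffInv χ) := by
  refine contDiff_iff_contDiffAt.2 fun s => ?_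
  rcases eq_or_ne s 0 with rfl | hs
  · refine (contDiffAt_const (c := (0 : ℝ))).congr_of_eventuallyEq ?_
    filter_upwards [h0] with y hy
    simp [cutoffInv, show χ y = 0 from hy]
  · refine (hχ.contDiffAt.div contDiffAt_id hs).congr_of_eventuallyEq ?_
    filter_upwards [isOpen_ne.mem_nhds hs] with y hy
    simp [cutoffInv, show y ≠ 0 from hy]

theorem exists_abs_iterate_deriv_le_of_eq_inv {ψ : ℝ → ℝ} (hψ : ContDiff ℝ ∞ ψ) {R : ℝ}
    (hR : ∀ s, R < |s| → ψ s = s⁻¹) (n : ℕ) : ∃ B, ∀ s, |deriv^[n] ψ s| ≤ B := by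
  obtain ⟨B, hB⟩ := (isCompact_Icc (a := -max R 1) (b := max R 1)).exists_bound_of_continuousOn
    (hψ.iterate_deriv n).continuous.continuousOn
  refine ⟨max B n.factorial, fun s => ?_⟩
  rcases le_or_gt |s| (max R 1) with hs | hs
  · exact (hB s (abs_le.1 hs)).trans (le_max_left _ _)
  · have hinv : ψ =ᶠ[𝓝 s] Inv.inv := by
      filter_upwards [(isOpen_lt continuous_const continuous_abs).mem_nhds
        ((le_max_left R 1).trans_lt hs)] with y hy using hR y hy
    have hs1 : 1 ≤ |s| := (le_max_right R 1).trans hs.le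
    rw [← iteratedDeriv_eq_iterate, hinv.iteratedDeriv_eq, iteratedDeriv_eq_iterate,
      iter_deriv_inv, abs_mul, abs_mul, abs_pow, abs_neg, abs_one, one_pow, one_mul,
      Nat.abs_cast, abs_zpow]
    calc (n.factorial : ℝ) * |s| ^ (-1 - n : ℤ) ≤ n.factorial * 1 :=
          mul_le_mul_of_nonneg_left (zpow_le_one_of_nonpos₀ hs1 (by omega)) (by positivity)
      _ ≤ max B n.factorial := by rw [mul_one]; exact le_max_right _ _

theorem exists_pos_abs_iterate_deriv_le_of_eq_inv {ψ : ℝ → ℝ} (hψ : ContDiff ℝ ∞ ψ) {R : ℝ}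
    (hR : ∀ s, R < |s| → ψ s = s⁻¹) (K : ℕ) :
    ∃ B, 0 < B ∧ ∀ n ≤ K, ∀ s, |deriv^[n] ψ s| ≤ B := by
  choose B hB using exists_abs_iterate_deriv_le_of_eq_inv hψ hR
  refine ⟨1 + ∑ n ∈ Finset.range (K + 1), |B n|, by positivity, fun n hn s => ?_⟩
  calc |deriv^[n] ψ s| ≤ |B n| := (hB n s).trans (le_abs_self _)
    _ ≤ ∑ m ∈ Finset.range (K + 1), |B m| :=
        Finset.single_le_sum (fun m _ => abs_nonneg (B m)) (Finset.mem_range.2 (by omega))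
    _ ≤ _ := le_add_of_nonneg_left zero_le_one

variable {ν : ℕ}

section LinearForm

variable (L : (Fin ν → ℝ) →L[ℝ] ℝ)

theorem pderiv'_const_mul_comp {f : ℝ → ℝ} (hf : Differentiable ℝ f) (K : ℝ) (i : Fin ν) :
    pderiv' i (fun x => K * f (L x)) = fun x => K * L (Pi.single i 1) * deriv f (L x) := by
  funext x
  have hK : HasFDerivAt (fun y => K * f (L y))
      (K • ((1 : ℝ →L[ℝ] ℝ).smulRight (deriv f (L x))).comp L) x :=
    ((hf (L x)).hasDerivAt.hasFDerivAt.comp x L.hasFDerivAt).const_mul K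
  rw [pderiv', hK.fderiv]
  simp only [smul_apply, ContinuousLinearMap.comp_apply, ContinuousLinearMap.smulRight_apply,
    one_apply_eq_self, smul_eq_mul]
  ring

theorem iterate_pderiv'_const_mul_comp {f : ℝ → ℝ} (hf : ContDiff ℝ ∞ f) (i : Fin ν) (n : ℕ)
    (K : ℝ) : (pderiv' i)^[n] (fun x => K * f (L x)) =
      fun x => K * L (Pi.single i 1) ^ n * deriv^[n] f (L x) := by
  induction n generalizing f K with
  | zero => simp
  | succ n ih =>
    rw [Function.iterate_succ_apply, pderiv'_const_mul_comp L (hf.differentiable (by simp)),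
      ih (contDiff_infty_iff_deriv.1 hf).2]
    funext x
    rw [Function.iterate_succ_apply]
    ring

theorem multiDeriv_const_mul_comp {f : ℝ → ℝ} (hf : ContDiff ℝ ∞ f) (α : Fin ν → ℕ) (K : ℝ) :
    multiDeriv α (fun x => K * f (L x)) =
      fun x => K * (∏ i, L (Pi.single i 1) ^ α i) * deriv^[∑ i, α i] f (L x) := by
  suffices ∀ l : List (Fin ν),
      l.foldr (fun i g => (pderiv' i)^[α i] g) (fun x => K * f (L x)) =
        fun x => K * (l.map fun i => L (Pi.single i 1) ^ α i).prod *
          deriv^[(l.map α).sum] f (L x) by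
    rw [multiDeriv, this, Fin.prod_univ_def, Fin.sum_univ_def]
  intro l
  induction l with
  | nil => simp
  | cons i l ih =>
    rw [List.foldr_cons, ih, iterate_pderiv'_const_mul_comp L (hf.iterate_deriv _)]
    funext x
    simp only [List.map_cons, List.prod_cons, List.sum_cons, Function.iterate_add_apply]
    ring

end LinearForm

noncomputable def dotCLM (a : Fin ν → ℝ) : (Fin ν → ℝ) →L[ℝ] ℝ :=
  ∑ i, a i • ContinuousLinearMap.proj i

@[simp]
theorem dotCLM_apply (a x : Fin ν → ℝ) : dotCLM a x = ∑ i, x i * a i := by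
  simp [dotCLM, mul_comm]

theorem one_le_brakF (ℓ : Fin ν → ℤ) : 1 ≤ brakF ℓ := by
  unfold brakF
  exact_mod_cast le_max_left _ _

theorem brakF_pos (ℓ : Fin ν → ℤ) : 0 < brakF ℓ :=
  one_pos.trans_le (one_le_brakF ℓ)

theorem abs_le_brakF (ℓ : Fin ν → ℤ) (i : Fin ν) : |(ℓ i : ℝ)| ≤ brakF ℓ := by
  rw [← Int.cast_abs, Int.abs_eq_natAbs, Int.cast_natCast, brakF]
  exact_mod_cast (Finset.le_sup (f := fun i => (ℓ i).natAbs) (Finset.mem_univ i)).trans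
    (le_max_right _ _)

theorem gsd_eq_mul_cutoffInv (χ : ℝ → ℝ) (τ : ℝ) {γ : ℝ} (hγ : γ ≠ 0) (ℓ : Fin ν → ℤ) :
    gsd χ τ γ ℓ = fun x => brakF ℓ ^ τ * γ⁻¹ *
      cutoffInv χ (((brakF ℓ ^ τ * γ⁻¹) • dotCLM fun i => (ℓ i : ℝ)) x) := by
  have hb : brakF ℓ ^ τ ≠ 0 := (Real.rpow_pos_of_pos (brakF_pos ℓ) τ).ne'
  have hc : brakF ℓ ^ τ * γ⁻¹ ≠ 0 := mul_ne_zero hb (inv_ne_zero hγ)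
  funext x
  simp only [smul_apply, dotCLM_apply, smul_eq_mul, gsd, cutoffInv]
  by_cases h : ∑ i, x i * (ℓ i : ℝ) = 0
  · simp [h]
  · rw [if_neg h, if_neg (mul_ne_zero hc h)]
    field_simp

theorem gsd_eq_one_div (hχ : ∀ y, 2 / 3 ≤ |y| → χ y = 1) (τ : ℝ) {γ : ℝ} (hγ : 0 < γ)
    (ℓ : Fin ν → ℤ) (x : Fin ν → ℝ) (hx : γ * brakF ℓ ^ (-τ) ≤ |∑ i, x i * (ℓ i : ℝ)|) :
    gsd χ τ γ ℓ x = 1 / ∑ i, x i * (ℓ i : ℝ) := by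
  have hb : 0 < brakF ℓ ^ τ := Real.rpow_pos_of_pos (brakF_pos ℓ) τ
  have hc : 0 < brakF ℓ ^ τ * γ⁻¹ := by positivity
  have hcx : 1 ≤ |brakF ℓ ^ τ * γ⁻¹ * ∑ i, x i * (ℓ i : ℝ)| := by
    rw [abs_mul, abs_of_pos hc]
    calc 1 = brakF ℓ ^ τ * γ⁻¹ * (γ * brakF ℓ ^ (-τ)) := by
          rw [Real.rpow_neg (brakF_pos ℓ).le]; field_simp
      _ ≤ _ := by gcongr
  rw [gsd_eq_mul_cutoffInv χ τ hγ.ne' ℓ]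
  simp only [smul_apply, dotCLM_apply, smul_eq_mul]
  rw [cutoffInv_eq_inv (hχ _ (by linarith)), mul_inv, ← mul_assoc, mul_inv_cancel₀ hc.ne',
    one_mul, one_div]

theorem abs_multiDeriv_gsd_le (hψ : ContDiff ℝ ∞ (cutoffInv χ)) (τ : ℝ) {γ : ℝ} (hγ : 0 < γ)
    (ℓ : Fin ν → ℤ) (α : Fin ν → ℕ) (x : Fin ν → ℝ) {B : ℝ}
    (hB : ∀ s, |deriv^[∑ i, α i] (cutoffInv χ) s| ≤ B) :
    |multiDeriv α (gsd χ τ γ ℓ) x| ≤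
      (brakF ℓ ^ τ * γ⁻¹) ^ (∑ i, α i + 1) * brakF ℓ ^ (∑ i, α i) * B := by
  set c := brakF ℓ ^ τ * γ⁻¹
  have hb := one_le_brakF ℓ
  have hc : 0 < c := by positivity
  have hprod : |∏ i, ((c • dotCLM fun i => (ℓ i : ℝ)) (Pi.single i 1)) ^ α i| ≤
      (c * brakF ℓ) ^ ∑ i, α i := by
    rw [Finset.abs_prod, ← Finset.prod_pow_eq_pow_sum]
    gcongr with i
    simp only [smul_apply, dotCLM_apply, smul_eq_mul, Pi.single_apply, ite_mul, one_mul,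
      zero_mul, Finset.sum_ite_eq', Finset.mem_univ, ↓reduceIte, abs_pow, abs_mul, abs_of_pos hc]
    gcongr
    exact abs_le_brakF ℓ i
  rw [gsd_eq_mul_cutoffInv χ τ hγ.ne' ℓ, multiDeriv_const_mul_comp _ hψ]
  calc |c * (∏ i, ((c • dotCLM fun i => (ℓ i : ℝ)) (Pi.single i 1)) ^ α i) *
        deriv^[∑ i, α i] (cutoffInv χ) ((c • dotCLM fun i => (ℓ i : ℝ)) x)|
      ≤ c * (c * brakF ℓ) ^ (∑ i, α i) * B := by
        rw [abs_mul, abs_mul, abs_of_pos hc]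
        exact mul_le_mul (by gcongr) (hB _) (abs_nonneg _) (by positivity)
    _ = c ^ (∑ i, α i + 1) * brakF ℓ ^ (∑ i, α i) * B := by ring

theorem pow_mul_scale_pow_le {b τ γ : ℝ} (hb : 1 ≤ b) (hτ : 0 ≤ τ) (hγ : 0 < γ) {N k : ℕ}
    (hN : N ≤ k + 1) :
    γ ^ N * ((b ^ τ * γ⁻¹) ^ (N + 1) * b ^ N) ≤ γ⁻¹ * b ^ ((k : ℝ) + 1 + ((k : ℝ) + 2) * τ) := by
  have hb0 : 0 < b := one_pos.trans_le hb
  calc γ ^ N * ((b ^ τ * γ⁻¹) ^ (N + 1) * b ^ N)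
      = γ⁻¹ * b ^ ((N : ℝ) + τ * ((N + 1 : ℕ) : ℝ)) := by
        rw [Real.rpow_add hb0, Real.rpow_natCast, Real.rpow_mul_natCast hb0.le, mul_pow,
          inv_pow]
        field_simp
        ring
    _ ≤ γ⁻¹ * b ^ ((k : ℝ) + 1 + ((k : ℝ) + 2) * τ) := by
        have hN' : (N : ℝ) ≤ k + 1 := by exact_mod_cast hN
        gcongr γ⁻¹ * ?_
        exact Real.rpow_le_rpow_of_exponent_le hb (by push_cast; nlinarith)

end SmallDivisor

open SmallDivisor

theorem small_divisor_inverse_extension_general (ν k : ℕ)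
    (χ : ℝ → ℝ) (hχ : IsCutoff χ) :
    ∃ C : ℝ, 0 < C ∧ ∀ τ : ℝ, 0 < τ → ∀ γ : ℝ, 0 < γ → γ ≤ 1 →
      ∀ ℓ : Fin ν → ℤ, ℓ ≠ 0 →
        (∀ m : ℕ, ContDiff ℝ m (gsd χ τ γ ℓ)) ∧
        (∀ ω : Fin ν → ℝ, γ * brakF ℓ ^ (-τ) ≤ |∑ i, ω i * (ℓ i : ℝ)| →
          gsd χ τ γ ℓ ω = 1 / (∑ i, ω i * (ℓ i : ℝ))) ∧
        (∀ ω : Fin ν → ℝ, ∀ α : Fin ν → ℕ, ∑ i, α i ≤ k + 1 →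
          γ ^ (∑ i, α i) * |multiDeriv α (gsd χ τ γ ℓ) ω| ≤
            C * γ⁻¹ * brakF ℓ ^ ((k : ℝ) + 1 + ((k : ℝ) + 2) * τ)) := by
  obtain ⟨hχ_smooth, -, -, hχ_zero, hχ_one⟩ := hχ
  have hχ_nhds_zero : χ =ᶠ[𝓝 0] 0 := by
    filter_upwards [Metric.closedBall_mem_nhds (0 : ℝ) (by norm_num : (0 : ℝ) < 1 / 3)] with y hy
    exact hχ_zero y (by simpa using hy)
  have hψ := contDiff_cutoffInv (contDiff_infty.2 hχ_smooth) hχ_nhds_zero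
  obtain ⟨B, hB, hB_le⟩ := exists_pos_abs_iterate_deriv_le_of_eq_inv hψ
    (fun s hs => cutoffInv_eq_inv (hχ_one s hs.le)) (k + 1)
  refine ⟨B, hB, fun τ hτ γ hγ _ ℓ _ =>
    ⟨fun m => ?_, gsd_eq_one_div hχ_one τ hγ ℓ, fun x α hα => ?_⟩⟩
  · rw [gsd_eq_mul_cutoffInv χ τ hγ.ne' ℓ]
    exact (contDiff_const.mul (hψ.comp (ContinuousLinearMap.contDiff _))).of_le
      (by exact_mod_cast le_top)
  · set N := ∑ i, α i
    calc γ ^ N * |multiDeriv α (gsd χ τ γ ℓ) x|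
        ≤ γ ^ N * ((brakF ℓ ^ τ * γ⁻¹) ^ (N + 1) * brakF ℓ ^ N * B) := by
          gcongr
          exact abs_multiDeriv_gsd_le hψ τ hγ ℓ α x (hB_le N hα)
      _ = B * (γ ^ N * ((brakF ℓ ^ τ * γ⁻¹) ^ (N + 1) * brakF ℓ ^ N)) := by ring
      _ ≤ B * (γ⁻¹ * brakF ℓ ^ ((k : ℝ) + 1 + ((k : ℝ) + 2) * τ)) :=
          mul_le_mul_of_nonneg_left (pow_mul_scale_pow_le (one_le_brakF ℓ) hτ.le hγ hα) hB.le
      _ = B * γ⁻¹ * brakF ℓ ^ ((k : ℝ) + 1 + ((k : ℝ) + 2) * τ) := by ring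

/-- Extension of the inverse of the small divisor ω·ℓ: g_ℓ is C^∞ on ℝ^ν, coincides with
1/(ω·ℓ) where |ω·ℓ| ≥ γ⟨ℓ⟩^{−τ}, and satisfies γ^{|α|}|∂^α g_ℓ(ω)| ≤ C γ⁻¹ ⟨ℓ⟩^μ with
μ = k+1+(k+2)τ, for a constant C depending only on k, ν and χ. -/
theorem small_divisor_inverse_extension (ν k : ℕ) (hν : 1 ≤ ν)
    (χ : ℝ → ℝ) (hχ : IsCutoff χ) :
    ∃ C : ℝ, 0 < C ∧ ∀ τ : ℝ, 0 < τ → ∀ γ : ℝ, 0 < γ → γ ≤ 1 →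
      ∀ ℓ : Fin ν → ℤ, ℓ ≠ 0 →
        (∀ m : ℕ, ContDiff ℝ m (gsd χ τ γ ℓ)) ∧
        (∀ ω : Fin ν → ℝ, γ * brakF ℓ ^ (-τ) ≤ |∑ i, ω i * (ℓ i : ℝ)| →
          gsd χ τ γ ℓ ω = 1 / (∑ i, ω i * (ℓ i : ℝ))) ∧
        (∀ ω : Fin ν → ℝ, ∀ α : Fin ν → ℕ, ∑ i, α i ≤ k + 1 →
          γ ^ (∑ i, α i) * |multiDeriv α (gsd χ τ γ ℓ) ω| ≤
            C * γ⁻¹ * brakF ℓ ^ ((k : ℝ) + 1 + ((k : ℝ) + 2) * τ)) :=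
  small_divisor_inverse_extension_general ν k χ hχ
end

section
/- (Automatic second-order Melnikov conditions for large frequencies.) Let 0 < h₁ < h₂, ν ≥ 1 an integer, τ > 0 and K > 0. Then there exists C₀ > 0, depending only on h₁, h₂, τ, K, with the following property. Let h ∈ [h₁,h₂], γ ∈ (0,1], N ≥ 1 a real number, and let ω ∈ ℝ^ν satisfy the Diophantine conditions |ω·ℓ| ≥ 2γ⟨ℓ⟩^{−τ} for all ℓ ∈ ℤ^ν with 0 < |ℓ| ≤ N. Let m ∈ ℝ with |m| ≤ 2 and let (r_j)_{j≥1} be real numbers with √j·|r_j| ≤ K for all j ≥ 1; set μ_j := m·(j·tanh(h·j))^{1/2} + r_j. Then for every ℓ ∈ ℤ^ν with 0 < |ℓ| ≤ N and all positive integers j, j' with |j − j'| ≤ N and min{j, j'} ≥ C₀·N^{2(τ+1)}·γ^{−2}, one has |ω·ℓ + μ_j − μ_{j'}| ≥ γ⟨ℓ⟩^{−τ}. -/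
open Real

namespace Real

theorem tanh_eq_one_sub (x : ℝ) : tanh x = 1 - 2 / (exp (2 * x) + 1) := by
  have hx : exp (2 * x) = exp x * exp x := by rw [two_mul, exp_add]
  rw [tanh_eq, exp_neg, hx]
  field_simp
  ring

theorem one_sub_tanh_le {x : ℝ} (hx : -1 < x) : 1 - tanh x ≤ (x + 1)⁻¹ := by
  rw [tanh_eq_one_sub, sub_sub_cancel, div_le_iff₀ (by positivity)]
  have := add_one_le_exp (2 * x)
  rw [inv_mul_eq_div, le_div_iff₀ (by linarith)]
  nlinarith

theorem mul_one_sub_tanh_mul_le {h x : ℝ} (hh : 0 < h) (hx : 0 ≤ x) :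
    x * (1 - tanh (h * x)) ≤ h⁻¹ :=
  calc x * (1 - tanh (h * x)) ≤ x * (h * x + 1)⁻¹ :=
        mul_le_mul_of_nonneg_left (one_sub_tanh_le (by nlinarith)) hx
    _ ≤ h⁻¹ := by
        rw [mul_inv_le_iff₀ (by positivity), inv_mul_eq_div, le_div_iff₀ hh]
        linarith

theorem abs_mul_tanh_mul_sub_le {h x y : ℝ} (hh : 0 < h) (hx : 0 ≤ x) (hy : 0 ≤ y) :
    |x * tanh (h * x) - y * tanh (h * y)| ≤ |x - y| + h⁻¹ := by
  have hcorr : |x * (1 - tanh (h * x)) - y * (1 - tanh (h * y))| ≤ h⁻¹ :=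
    abs_sub_le_of_nonneg_of_le (mul_nonneg hx (sub_nonneg.2 (tanh_lt_one _).le))
      (mul_one_sub_tanh_mul_le hh hx) (mul_nonneg hy (sub_nonneg.2 (tanh_lt_one _).le))
      (mul_one_sub_tanh_mul_le hh hy)
  calc |x * tanh (h * x) - y * tanh (h * y)|
      = |(x - y) - (x * (1 - tanh (h * x)) - y * (1 - tanh (h * y)))| := by ring_nf
    _ ≤ |x - y| + |x * (1 - tanh (h * x)) - y * (1 - tanh (h * y))| := abs_sub _ _
    _ ≤ |x - y| + h⁻¹ := by gcongr

theorem div_add_one_mul_le_mul_tanh_mul {h₁ h x : ℝ} (hh₁ : 0 < h₁) (hh : h₁ ≤ h) (hx : 1 ≤ x) :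
    h₁ / (h₁ + 1) * x ≤ x * tanh (h * x) := by
  have hhx : h₁ ≤ h * x := by nlinarith
  have : h₁ / (h₁ + 1) ≤ tanh (h * x) :=
    calc h₁ / (h₁ + 1) = 1 - (h₁ + 1)⁻¹ := by field_simp; ring
      _ ≤ 1 - (h * x + 1)⁻¹ := by gcongr
      _ ≤ tanh (h * x) := by linarith [one_sub_tanh_le (x := h * x) (by linarith)]
  nlinarith

theorem abs_sqrt_sub_sqrt_le_div {x y d : ℝ} (hx : 0 ≤ x) (hy : 0 ≤ y) (hd : 0 < d)
    (hle : d ≤ √x + √y) : |√x - √y| ≤ |x - y| / d := by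
  have hfactor : x - y = (√x - √y) * (√x + √y) := by
    nlinarith [sq_sqrt hx, sq_sqrt hy]
  rw [le_div_iff₀ hd, hfactor, abs_mul, abs_of_nonneg (by positivity : 0 ≤ √x + √y)]
  exact mul_le_mul_of_nonneg_left hle (abs_nonneg _)

theorem abs_sqrt_mul_tanh_sub_le {h₁ h n x y : ℝ} (hh₁ : 0 < h₁) (hh : h₁ ≤ h) (hn : 1 ≤ n)
    (hnx : n ≤ x) (hny : n ≤ y) :
    |√(x * tanh (h * x)) - √(y * tanh (h * y))| ≤
      (|x - y| + h₁⁻¹) / (2 * √(h₁ / (h₁ + 1) * n)) := by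
  have hlow : ∀ z, n ≤ z → h₁ / (h₁ + 1) * n ≤ z * tanh (h * z) := fun z hz =>
    (mul_le_mul_of_nonneg_left hz (by positivity)).trans
      (div_add_one_mul_le_mul_tanh_mul hh₁ hh (hn.trans hz))
  have hc : 0 ≤ h₁ / (h₁ + 1) * n := by positivity
  calc |√(x * tanh (h * x)) - √(y * tanh (h * y))|
      ≤ |x * tanh (h * x) - y * tanh (h * y)| / (2 * √(h₁ / (h₁ + 1) * n)) :=
        abs_sqrt_sub_sqrt_le_div (hc.trans (hlow x hnx)) (hc.trans (hlow y hny)) (by positivity)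
          (by linarith [sqrt_le_sqrt (hlow x hnx), sqrt_le_sqrt (hlow y hny)])
    _ ≤ (|x - y| + h₁⁻¹) / (2 * √(h₁ / (h₁ + 1) * n)) := by
        gcongr
        exact (abs_mul_tanh_mul_sub_le (by linarith) (by linarith) (by linarith)).trans
          (by gcongr)

end Real

theorem abs_le_div_sqrt_of_sqrt_mul_abs_le {n k a K : ℝ} (hn : 0 < n) (hnk : n ≤ k)
    (h : √k * |a| ≤ K) : |a| ≤ K / √n := by
  rw [le_div_iff₀ (sqrt_pos.2 hn), mul_comm]
  exact (mul_le_mul_of_nonneg_right (sqrt_le_sqrt hnk) (abs_nonneg a)).trans h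

theorem abs_dispersion_sub_le {h₁ h m K : ℝ} {r : ℕ → ℝ} (hh₁ : 0 < h₁) (hh : h₁ ≤ h)
    (hm : |m| ≤ 2) (hr : ∀ j : ℕ, 1 ≤ j → √j * |r j| ≤ K) {j j' : ℕ} (hj : 1 ≤ j) (hj' : 1 ≤ j') :
    |(m * √(j * tanh (h * j)) + r j) - (m * √(j' * tanh (h * j')) + r j')| ≤
      ((|(j : ℝ) - j'| + h₁⁻¹) / √(h₁ / (h₁ + 1)) + 2 * K) / √((min j j' : ℕ) : ℝ) := by
  set n : ℝ := ((min j j' : ℕ) : ℝ)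
  have hn : 1 ≤ n := Nat.one_le_cast.2 (le_min hj hj')
  have hnj : n ≤ j := Nat.cast_le.2 (min_le_left j j')
  have hnj' : n ≤ j' := Nat.cast_le.2 (min_le_right j j')
  have hfreq := abs_sqrt_mul_tanh_sub_le hh₁ hh hn hnj hnj'
  have hrj := abs_le_div_sqrt_of_sqrt_mul_abs_le (by linarith) hnj (hr j hj)
  have hrj' := abs_le_div_sqrt_of_sqrt_mul_abs_le (by linarith) hnj' (hr j' hj')
  have hsplit : √(h₁ / (h₁ + 1) * n) = √(h₁ / (h₁ + 1)) * √n := sqrt_mul (by positivity) n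
  calc |(m * √(j * tanh (h * j)) + r j) - (m * √(j' * tanh (h * j')) + r j')|
      = |m * (√(j * tanh (h * j)) - √(j' * tanh (h * j'))) + (r j - r j')| := by ring_nf
    _ ≤ |m| * |√(j * tanh (h * j)) - √(j' * tanh (h * j'))| + (|r j| + |r j'|) := by
        rw [← abs_mul]
        exact (abs_add_le _ _).trans (by gcongr; exact abs_sub _ _)
    _ ≤ 2 * ((|(j : ℝ) - j'| + h₁⁻¹) / (2 * √(h₁ / (h₁ + 1) * n))) + (K / √n + K / √n) := by
        gcongr
    _ = ((|(j : ℝ) - j'| + h₁⁻¹) / √(h₁ / (h₁ + 1)) + 2 * K) / √n := by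
        rw [hsplit]
        field_simp
        ring

theorem mul_le_mul_rpow_neg_mul_sqrt {B γ N τ n : ℝ} (hB : 0 ≤ B) (hγ : 0 < γ) (hN : 0 < N)
    (hn : B ^ 2 * N ^ (2 * (τ + 1)) * γ ^ (-2 : ℝ) ≤ n) : B * N ≤ γ * N ^ (-τ) * √n := by
  have hsq : (B * N ^ (τ + 1) / γ) ^ 2 = B ^ 2 * N ^ (2 * (τ + 1)) * γ ^ (-2 : ℝ) := by
    rw [div_pow, mul_pow, ← rpow_natCast (N ^ (τ + 1)), ← rpow_mul hN.le, rpow_neg hγ.le,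
      rpow_two]
    push_cast
    ring_nf
  have hroot : B * N ^ (τ + 1) / γ ≤ √n :=
    (le_sqrt (by positivity) ((sq_nonneg _).trans (hsq ▸ hn))).2 (hsq ▸ hn)
  calc B * N = γ * N ^ (-τ) * (B * N ^ (τ + 1) / γ) := by
        rw [rpow_add hN, rpow_one, rpow_neg hN.le]
        field_simp
    _ ≤ γ * N ^ (-τ) * √n := by gcongr

theorem le_abs_add_of_two_mul_le_abs {a d ε : ℝ} (ha : 2 * ε ≤ |a|) (hd : |d| ≤ ε) :
    ε ≤ |a + d| := by
  have := abs_sub (a + d) d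
  rw [add_sub_cancel_right] at this
  linarith

theorem one_le_brakF {ν : ℕ} (ℓ : Fin ν → ℤ) : 1 ≤ brakF ℓ := by
  unfold brakF
  exact_mod_cast le_max_left _ _

theorem brakF_le {ν : ℕ} {ℓ : Fin ν → ℤ} {N : ℝ} (hN : 1 ≤ N)
    (hℓ : ((Finset.univ.sup fun i => (ℓ i).natAbs : ℕ) : ℝ) ≤ N) : brakF ℓ ≤ N := by
  unfold brakF
  push_cast
  exact max_le hN hℓ

noncomputable def melnikovConst (h₁ K : ℝ) : ℝ := (1 + h₁⁻¹) / √(h₁ / (h₁ + 1)) + 2 * K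

theorem dispersion_bound_le_melnikovConst_mul {h₁ K N d : ℝ} (hh₁ : 0 < h₁) (hK : 0 ≤ K)
    (hN : 1 ≤ N) (hd : d ≤ N) :
    (d + h₁⁻¹) / √(h₁ / (h₁ + 1)) + 2 * K ≤ melnikovConst h₁ K * N := by
  have hinv : h₁⁻¹ ≤ h₁⁻¹ * N := le_mul_of_one_le_right (by positivity) hN
  have hK' : 2 * K ≤ 2 * K * N := le_mul_of_one_le_right (by positivity) hN
  rw [melnikovConst, add_mul, div_mul_eq_mul_div]
  gcongr
  linarith

theorem second_melnikov_large_frequencies_general (h₁ h₂ : ℝ) (hh₁ : 0 < h₁)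
    (ν : ℕ) (τ K : ℝ) (hτ : 0 < τ) (hK : 0 < K) :
    ∃ C₀ : ℝ, 0 < C₀ ∧ ∀ h ∈ Set.Icc h₁ h₂, ∀ γ : ℝ, 0 < γ → γ ≤ 1 →
      ∀ N : ℝ, 1 ≤ N → ∀ ω : Fin ν → ℝ,
      (∀ ℓ : Fin ν → ℤ, ℓ ≠ 0 →
        ((Finset.univ.sup fun i => (ℓ i).natAbs : ℕ) : ℝ) ≤ N →
        2 * γ * brakF ℓ ^ (-τ) ≤ |∑ i, ω i * (ℓ i : ℝ)|) →
      ∀ m : ℝ, |m| ≤ 2 → ∀ r : ℕ → ℝ, (∀ j : ℕ, 1 ≤ j → Real.sqrt j * |r j| ≤ K) →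
      ∀ ℓ : Fin ν → ℤ, ℓ ≠ 0 →
        ((Finset.univ.sup fun i => (ℓ i).natAbs : ℕ) : ℝ) ≤ N →
      ∀ j j' : ℕ, 1 ≤ j → 1 ≤ j' → |(j : ℝ) - (j' : ℝ)| ≤ N →
        C₀ * N ^ (2 * (τ + 1)) * γ ^ (-(2 : ℝ)) ≤ ((min j j' : ℕ) : ℝ) →
        γ * brakF ℓ ^ (-τ) ≤
          |(∑ i, ω i * (ℓ i : ℝ)) +
            (m * Real.sqrt ((j : ℝ) * Real.tanh (h * (j : ℝ))) + r j) -
            (m * Real.sqrt ((j' : ℝ) * Real.tanh (h * (j' : ℝ))) + r j')| := by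
  have hB : 0 < melnikovConst h₁ K := by unfold melnikovConst; positivity
  refine ⟨melnikovConst h₁ K ^ 2, by positivity, ?_⟩
  intro h hh γ hγ _ N hN ω hω m hm r hr ℓ hℓ hℓN j j' hj hj' hjj' hn
  have hsn : 0 < √((min j j' : ℕ) : ℝ) := sqrt_pos.2 (Nat.cast_pos.2 (le_min hj hj'))
  have hbrak : N ^ (-τ) ≤ brakF ℓ ^ (-τ) :=
    rpow_le_rpow_of_nonpos (by linarith [one_le_brakF ℓ]) (brakF_le hN hℓN) (by linarith)
  rw [add_sub_assoc]
  refine le_abs_add_of_two_mul_le_abs (by simpa only [mul_assoc] using hω ℓ hℓ hℓN) ?_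
  calc _ ≤ _ / _ := abs_dispersion_sub_le hh₁ hh.1 hm hr hj hj'
    _ ≤ melnikovConst h₁ K * N / √((min j j' : ℕ) : ℝ) := by
        gcongr
        exact dispersion_bound_le_melnikovConst_mul hh₁ hK.le hN hjj'
    _ ≤ γ * N ^ (-τ) := by
        rw [div_le_iff₀ hsn]
        exact mul_le_mul_rpow_neg_mul_sqrt hB.le hγ (by linarith) hn
    _ ≤ γ * brakF ℓ ^ (-τ) := by gcongr

/-- Automatic second-order Melnikov conditions for large frequencies: if ω is
γ-Diophantine up to scale N, μ_j = m √(j tanh(h j)) + r_j with |m| ≤ 2 and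
√j |r_j| ≤ K, then for 0 < |ℓ| ≤ N, |j − j'| ≤ N and min{j,j'} ≥ C₀ N^{2(τ+1)} γ^{−2},
one has |ω·ℓ + μ_j − μ_{j'}| ≥ γ ⟨ℓ⟩^{−τ}. -/
theorem second_melnikov_large_frequencies (h₁ h₂ : ℝ) (hh₁ : 0 < h₁) (hh : h₁ < h₂)
    (ν : ℕ) (hν : 1 ≤ ν) (τ K : ℝ) (hτ : 0 < τ) (hK : 0 < K) :
    ∃ C₀ : ℝ, 0 < C₀ ∧ ∀ h ∈ Set.Icc h₁ h₂, ∀ γ : ℝ, 0 < γ → γ ≤ 1 →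
      ∀ N : ℝ, 1 ≤ N → ∀ ω : Fin ν → ℝ,
      (∀ ℓ : Fin ν → ℤ, ℓ ≠ 0 →
        ((Finset.univ.sup fun i => (ℓ i).natAbs : ℕ) : ℝ) ≤ N →
        2 * γ * brakF ℓ ^ (-τ) ≤ |∑ i, ω i * (ℓ i : ℝ)|) →
      ∀ m : ℝ, |m| ≤ 2 → ∀ r : ℕ → ℝ, (∀ j : ℕ, 1 ≤ j → Real.sqrt j * |r j| ≤ K) →
      ∀ ℓ : Fin ν → ℤ, ℓ ≠ 0 →
        ((Finset.univ.sup fun i => (ℓ i).natAbs : ℕ) : ℝ) ≤ N →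
      ∀ j j' : ℕ, 1 ≤ j → 1 ≤ j' → |(j : ℝ) - (j' : ℝ)| ≤ N →
        C₀ * N ^ (2 * (τ + 1)) * γ ^ (-(2 : ℝ)) ≤ ((min j j' : ℕ) : ℝ) →
        γ * brakF ℓ ^ (-τ) ≤
          |(∑ i, ω i * (ℓ i : ℝ)) +
            (m * Real.sqrt ((j : ℝ) * Real.tanh (h * (j : ℝ))) + r j) -
            (m * Real.sqrt ((j' : ℝ) * Real.tanh (h * (j' : ℝ))) + r j')| :=
  second_melnikov_large_frequencies_general h₁ h₂ hh₁ ν τ K hτ hK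
end
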